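/- arXiv:2109.05384 — 3 statements merged into one kernel-verified Lean document; each statement's English description precedes it below -/
import Mathlib

section
/- Let H := (L²([−1,1];ℂ)) × ℂ^d and let T : ℂ^m → H be a continuous linear map given in SVD form: there are an orthonormal basis (v_i)_{i=0}^{m−1} of ℂ^m, an orthonormal family (u_i)_{i=0}^{m−1} in H, and a nonincreasing sequence σ_0 ≥ σ_1 ≥ … ≥ σ_{m−1} ≥ 0 such that T x = Σ_{i=0}^{m−1} σ_i ⟨v_i, x⟩ u_i. Fix k with 1 ≤ k ≤ m−1 and suppose the strict gap σ_{k−1} > σ_k holds. Then the best rank-k approximation of T in the Frobenius norm is unique: if S : ℂ^m → H is continuous linear with range of dimension at most k and ‖T − S‖_F² = Σ_{i=k}^{m−1} σ_i², then S equals the truncation T_k, where T_k x := Σ_{i=0}^{k−1} σ_i ⟨v_i, x⟩ u_i. -/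
open MeasureTheory

/-- The Hilbert space `H := L²([-1,1];ℂ) × ℂ^d` with the natural (ℓ²-product)
Hilbert-space structure. -/
noncomputable abbrev Hsp (d : ℕ) : Type :=
  WithLp 2 ((Lp ℂ 2 (volume.restrict (Set.Icc (-1:ℝ) 1))) × EuclideanSpace ℂ (Fin d))

/-!
Let `K = ker S`, so `dim K ≥ m - k`, and let `P` be the orthogonal projection onto `K`.
The Frobenius norm `∑ ‖L (b i)‖²` equals `re tr (L† L)` for every orthonormal basis `b`, hence
it splits as `‖L P‖_F² + ‖L (1 - P)‖_F²`. For `L = T - S` we have `L P = T P`, and evaluating on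
the right singular vectors gives `‖T P‖_F² = ∑ σᵢ² cᵢ` with `cᵢ = ‖P vᵢ‖² ∈ [0, 1]` and
`∑ cᵢ = dim K ≥ m - k`. Such weights always give `∑ σᵢ² cᵢ ≥ ∑_{i ≥ k} σᵢ²`, and under the gap
equality forces `cᵢ = 0` for `i < k`, `cᵢ = 1` for `i ≥ k`, and `L (1 - P) = 0`. So `vᵢ ⊥ K` and
`S vᵢ = T vᵢ` for `i < k`, while `vᵢ ∈ K` for `i ≥ k`: `S` agrees with `T_k` on the basis `v`.
-/

open scoped InnerProductSpace
open Finset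

section Scalar

variable {ι : Type*} [Fintype ι] [DecidableEq ι]

theorem Finset.sum_mul_eq_sum_compl_add (s : Finset ι) (a c : ι → ℝ) (t : ℝ) :
    ∑ i, a i * c i = ∑ i ∈ sᶜ, a i + ∑ i ∈ s, (a i - t) * c i
      + t * (∑ i, c i - #sᶜ) + ∑ i ∈ sᶜ, (t - a i) * (1 - c i) := by
  rw [← s.sum_add_sum_compl (fun i => a i * c i), ← s.sum_add_sum_compl c]
  simp only [sub_mul, mul_sub, sum_sub_distrib, ← mul_sum, mul_one, sum_const, nsmul_eq_mul]
  ring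

theorem Finset.sum_compl_le_sum_mul (s : Finset ι) {a c : ι → ℝ} {t : ℝ} (ht : 0 ≤ t)
    (has : ∀ i ∈ s, t ≤ a i) (hasc : ∀ i ∉ s, a i ≤ t) (hc0 : ∀ i, 0 ≤ c i) (hc1 : ∀ i, c i ≤ 1)
    (hc : (#sᶜ : ℝ) ≤ ∑ i, c i) :
    ∑ i ∈ sᶜ, a i ≤ ∑ i, a i * c i := by
  rw [s.sum_mul_eq_sum_compl_add a c t]
  have h₁ : 0 ≤ ∑ i ∈ s, (a i - t) * c i :=
    sum_nonneg fun i hi => mul_nonneg (sub_nonneg.2 (has i hi)) (hc0 i)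
  have h₂ : 0 ≤ ∑ i ∈ sᶜ, (t - a i) * (1 - c i) := sum_nonneg fun i hi =>
    mul_nonneg (sub_nonneg.2 (hasc i (mem_compl.1 hi))) (sub_nonneg.2 (hc1 i))
  nlinarith

theorem Finset.eq_zero_and_eq_one_of_sum_mul_le (s : Finset ι) {a c : ι → ℝ} {t : ℝ} (ht : 0 ≤ t)
    (has : ∀ i ∈ s, t < a i) (hasc : ∀ i ∉ s, a i ≤ t) (hc0 : ∀ i, 0 ≤ c i) (hc1 : ∀ i, c i ≤ 1)
    (hc : (#sᶜ : ℝ) ≤ ∑ i, c i) (h : ∑ i, a i * c i ≤ ∑ i ∈ sᶜ, a i) :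
    (∀ i ∈ s, c i = 0) ∧ ∀ i ∉ s, c i = 1 := by
  have hs : ∀ i ∈ s, c i = 0 := by
    rw [s.sum_mul_eq_sum_compl_add a c t] at h
    have h₂ : 0 ≤ ∑ i ∈ sᶜ, (t - a i) * (1 - c i) := sum_nonneg fun i hi =>
      mul_nonneg (sub_nonneg.2 (hasc i (mem_compl.1 hi))) (sub_nonneg.2 (hc1 i))
    have h₁ : ∑ i ∈ s, (a i - t) * c i = 0 := le_antisymm (by nlinarith)
      (sum_nonneg fun i hi => mul_nonneg (sub_nonneg.2 (has i hi).le) (hc0 i))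
    intro i hi
    have := (sum_eq_zero_iff_of_nonneg fun i hi =>
      mul_nonneg (sub_nonneg.2 (has i hi).le) (hc0 i)).1 h₁ i hi
    exact (mul_eq_zero.1 this).resolve_left (sub_ne_zero.2 (has i hi).ne')
  refine ⟨hs, fun i hi => ?_⟩
  have hsc : (#sᶜ : ℝ) ≤ ∑ j ∈ sᶜ, c j := by
    rwa [← s.sum_add_sum_compl c, sum_eq_zero hs, zero_add] at hc
  have hsum : ∑ j ∈ sᶜ, (1 - c j) = 0 := by
    refine le_antisymm ?_ (sum_nonneg fun j _ => sub_nonneg.2 (hc1 j))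
    rw [sum_sub_distrib, sum_const, nsmul_one]
    linarith
  linarith [(sum_eq_zero_iff_of_nonneg fun j _ => sub_nonneg.2 (hc1 j)).1 hsum i (mem_compl.2 hi)]

end Scalar

variable {𝕜 E F ι : Type*} [RCLike 𝕜]
  [NormedAddCommGroup E] [InnerProductSpace 𝕜 E]
  [NormedAddCommGroup F] [InnerProductSpace 𝕜 F]

theorem Orthonormal.norm_sum_smul_sq [Fintype ι] {u : ι → F} (hu : Orthonormal 𝕜 u) (c : ι → 𝕜) :
    ‖∑ i, c i • u i‖ ^ 2 = ∑ i, ‖c i‖ ^ 2 := by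
  rw [@norm_sq_eq_re_inner 𝕜, hu.inner_sum, map_sum]
  simp_rw [RCLike.conj_mul]
  norm_cast

section Frobenius

variable [Fintype ι] [CompleteSpace F]

theorem OrthonormalBasis.sum_norm_sq_apply_eq_re_trace [CompleteSpace E]
    (b : OrthonormalBasis ι 𝕜 E) (L : E →L[𝕜] F) :
    ∑ i, ‖L (b i)‖ ^ 2 = RCLike.re (LinearMap.trace 𝕜 E (L.adjoint ∘L L : E →L[𝕜] E)) := by
  rw [LinearMap.trace_eq_sum_inner _ b, map_sum]
  refine sum_congr rfl fun i _ => ?_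
  rw [ContinuousLinearMap.coe_coe, ContinuousLinearMap.comp_apply,
    ContinuousLinearMap.adjoint_inner_right, ← @norm_sq_eq_re_inner 𝕜]

theorem OrthonormalBasis.sum_norm_sq_apply_starProjection_eq_re_trace [CompleteSpace E]
    (b : OrthonormalBasis ι 𝕜 E) (L : E →L[𝕜] F) (K : Submodule 𝕜 E) [K.HasOrthogonalProjection] :
    ∑ i, ‖L (K.starProjection (b i))‖ ^ 2 =
      RCLike.re (LinearMap.trace 𝕜 E (L.adjoint ∘L L ∘L K.starProjection : E →L[𝕜] E)) := by
  have := Module.Finite.of_basis b.toBasis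
  set P := K.starProjection
  have hP : P ∘L P = P := K.isIdempotentElem_starProjection
  calc ∑ i, ‖(L ∘L P) (b i)‖ ^ 2
      = RCLike.re (LinearMap.trace 𝕜 E ((P : E →ₗ[𝕜] E) ∘ₗ ↑(L.adjoint ∘L L ∘L P))) := by
        rw [b.sum_norm_sq_apply_eq_re_trace, ContinuousLinearMap.adjoint_comp,
          (isSelfAdjoint_starProjection K).adjoint_eq]
        rfl
    _ = RCLike.re (LinearMap.trace 𝕜 E (L.adjoint ∘L L ∘L P : E →L[𝕜] E)) := by
        rw [LinearMap.trace_comp_comm', ← ContinuousLinearMap.toLinearMap_comp,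
          ContinuousLinearMap.comp_assoc, ContinuousLinearMap.comp_assoc, hP]

theorem OrthonormalBasis.sum_norm_sq_apply_eq {κ : Type*} [Fintype κ] (b : OrthonormalBasis ι 𝕜 E)
    (b' : OrthonormalBasis κ 𝕜 E) (L : E →L[𝕜] F) :
    ∑ i, ‖L (b i)‖ ^ 2 = ∑ j, ‖L (b' j)‖ ^ 2 := by
  have := Module.Finite.of_basis b.toBasis
  have := FiniteDimensional.complete 𝕜 E
  rw [b.sum_norm_sq_apply_eq_re_trace, b'.sum_norm_sq_apply_eq_re_trace]

theorem OrthonormalBasis.sum_norm_sq_apply_eq_add_orthogonal (b : OrthonormalBasis ι 𝕜 E)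
    (L : E →L[𝕜] F) (K : Submodule 𝕜 E) [K.HasOrthogonalProjection] :
    ∑ i, ‖L (b i)‖ ^ 2 =
      ∑ i, ‖L (K.starProjection (b i))‖ ^ 2 + ∑ i, ‖L (Kᗮ.starProjection (b i))‖ ^ 2 := by
  have := Module.Finite.of_basis b.toBasis
  have := FiniteDimensional.complete 𝕜 E
  rw [b.sum_norm_sq_apply_eq_re_trace, b.sum_norm_sq_apply_starProjection_eq_re_trace,
    b.sum_norm_sq_apply_starProjection_eq_re_trace, ← RCLike.re.map_add, ← map_add,
    K.starProjection_orthogonal']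
  congr 3
  ext x
  simp

theorem OrthonormalBasis.sum_norm_sq_starProjection (b : OrthonormalBasis ι 𝕜 E) (K : Submodule 𝕜 E)
    [K.HasOrthogonalProjection] :
    ∑ i, ‖K.starProjection (b i)‖ ^ 2 = Module.finrank 𝕜 K := by
  have := Module.Finite.of_basis b.toBasis
  have := FiniteDimensional.complete 𝕜 E
  have hK : LinearMap.trace 𝕜 E K.starProjection = Module.finrank 𝕜 K := by
    have := (LinearMap.IsIdempotentElem.isProj_range _
      (ContinuousLinearMap.IsIdempotentElem.toLinearMap K.isIdempotentElem_starProjection)).trace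
    rwa [show (K.starProjection : E →ₗ[𝕜] E).range = K from K.range_starProjection] at this
  simpa [ContinuousLinearMap.adjoint_id, hK] using
    b.sum_norm_sq_apply_starProjection_eq_re_trace (ContinuousLinearMap.id 𝕜 E) K

end Frobenius

theorem OrthonormalBasis.card_sub_le_sum_norm_sq_starProjection_ker [Fintype ι]
    [FiniteDimensional 𝕜 E] (b : OrthonormalBasis ι 𝕜 E) {S : E →L[𝕜] F} {r : ℕ}
    (hS : Module.finrank 𝕜 (LinearMap.range (S : E →ₗ[𝕜] F)) ≤ r) :
    ((Fintype.card ι - r : ℕ) : ℝ) ≤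
      ∑ i, ‖(LinearMap.ker (S : E →ₗ[𝕜] F)).starProjection (b i)‖ ^ 2 := by
  have hrank := LinearMap.finrank_range_add_finrank_ker (S : E →ₗ[𝕜] F)
  rw [b.sum_norm_sq_starProjection, Module.finrank_eq_card_basis b.toBasis] at *
  exact_mod_cast (by omega)

section SVD

variable {T Tk S : E →L[𝕜] F} {u : ι → F} {σ : ι → ℝ} {s : Finset ι}

theorem norm_sq_apply_eq_sum_of_orthonormal [Fintype ι] (hu : Orthonormal 𝕜 u) {v : ι → E}
    (hT : ∀ x, T x = ∑ i, ((σ i : 𝕜) * ⟪v i, x⟫_𝕜) • u i) (x : E) :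
    ‖T x‖ ^ 2 = ∑ i, σ i ^ 2 * ‖⟪v i, x⟫_𝕜‖ ^ 2 := by
  simp [hT, hu.norm_sum_smul_sq, mul_pow]

theorem apply_eq_ite_of_orthonormal [DecidableEq ι] {v : ι → E} (hv : Orthonormal 𝕜 v)
    (hT : ∀ x, T x = ∑ i ∈ s, ((σ i : 𝕜) * ⟪v i, x⟫_𝕜) • u i) (j : ι) :
    T (v j) = if j ∈ s then (σ j : 𝕜) • u j else 0 := by
  simp [hT, orthonormal_iff_ite.1 hv]

variable [Fintype ι] {v : OrthonormalBasis ι 𝕜 E}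

theorem sum_norm_sq_apply_starProjection_of_orthonormal (hu : Orthonormal 𝕜 u)
    (hT : ∀ x, T x = ∑ i, ((σ i : 𝕜) * ⟪v i, x⟫_𝕜) • u i)
    (K : Submodule 𝕜 E) [K.HasOrthogonalProjection] :
    ∑ j, ‖T (K.starProjection (v j))‖ ^ 2 = ∑ i, σ i ^ 2 * ‖K.starProjection (v i)‖ ^ 2 := by
  simp_rw [norm_sq_apply_eq_sum_of_orthonormal hu hT]
  rw [sum_comm]
  refine sum_congr rfl fun i _ => ?_
  rw [← mul_sum, ← v.sum_sq_norm_inner_left]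
  simp_rw [K.inner_starProjection_left_eq_right]

variable [DecidableEq ι]

theorem eq_truncation_of_apply
    (hT : ∀ x, T x = ∑ i, ((σ i : 𝕜) * ⟪v i, x⟫_𝕜) • u i)
    (hTk : ∀ x, Tk x = ∑ i ∈ s, ((σ i : 𝕜) * ⟪v i, x⟫_𝕜) • u i)
    (hs : ∀ i ∈ s, S (v i) = T (v i)) (hsc : ∀ i ∉ s, S (v i) = 0) :
    S = Tk := by
  refine ContinuousLinearMap.coe_injective (v.toBasis.ext fun i => ?_)
  simp only [OrthonormalBasis.coe_toBasis, ContinuousLinearMap.coe_coe]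
  rw [apply_eq_ite_of_orthonormal v.orthonormal hTk]
  split_ifs with hi
  · rw [hs i hi, apply_eq_ite_of_orthonormal (s := univ) v.orthonormal (by simpa using hT),
      if_pos (mem_univ i)]
  · exact hsc i hi

theorem eq_truncation_of_sum_norm_sq_sub_le [CompleteSpace F] (hu : Orthonormal 𝕜 u) {t : ℝ}
    (hT : ∀ x, T x = ∑ i, ((σ i : 𝕜) * ⟪v i, x⟫_𝕜) • u i)
    (hTk : ∀ x, Tk x = ∑ i ∈ s, ((σ i : 𝕜) * ⟪v i, x⟫_𝕜) • u i)
    (ht : 0 ≤ t) (hσs : ∀ i ∈ s, t < σ i ^ 2) (hσsc : ∀ i ∉ s, σ i ^ 2 ≤ t)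
    (hS : Module.finrank 𝕜 (LinearMap.range (S : E →ₗ[𝕜] F)) ≤ #s)
    (hopt : ∑ i, ‖(T - S) (v i)‖ ^ 2 ≤ ∑ i ∈ sᶜ, σ i ^ 2) :
    S = Tk := by
  have := Module.Finite.of_basis v.toBasis
  set K := LinearMap.ker (S : E →ₗ[𝕜] F)
  set c : ι → ℝ := fun i => ‖K.starProjection (v i)‖ ^ 2
  have hsplit : ∑ i, ‖(T - S) (v i)‖ ^ 2 =
      ∑ i, σ i ^ 2 * c i + ∑ i, ‖(T - S) (Kᗮ.starProjection (v i))‖ ^ 2 := by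
    rw [v.sum_norm_sq_apply_eq_add_orthogonal _ K,
      ← sum_norm_sq_apply_starProjection_of_orthonormal hu hT K]
    simp [fun x => show S (K.starProjection x) = 0 from K.starProjection_apply_mem x]
  have hc0 (i : ι) : 0 ≤ c i := by positivity
  have hc1 (i : ι) : c i ≤ 1 := by
    have := K.norm_starProjection_apply_le (v i)
    rw [v.orthonormal.1 i] at this
    exact pow_le_one₀ (norm_nonneg _) this
  have hc : (#sᶜ : ℝ) ≤ ∑ i, c i := by
    rw [card_compl]
    exact v.card_sub_le_sum_norm_sq_starProjection_ker hS
  have hineq := s.sum_compl_le_sum_mul ht (fun i hi => (hσs i hi).le) hσsc hc0 hc1 hc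
  have hε : ∑ i, ‖(T - S) (Kᗮ.starProjection (v i))‖ ^ 2 = 0 :=
    le_antisymm (by linarith) (sum_nonneg fun i _ => sq_nonneg _)
  obtain ⟨hcs, hcsc⟩ := s.eq_zero_and_eq_one_of_sum_mul_le ht hσs hσsc hc0 hc1 hc (by linarith)
  refine eq_truncation_of_apply hT hTk (fun i hi => ?_) (fun i hi => ?_)
  · have hvi : v i ∈ Kᗮ := K.starProjection_apply_eq_zero_iff.1 (by simpa [c] using hcs i hi)
    have hQ := (sum_eq_zero_iff_of_nonneg fun i _ => sq_nonneg _).1 hε i (mem_univ i)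
    rw [Kᗮ.starProjection_eq_self_iff.2 hvi, sq_eq_zero_iff, norm_eq_zero, sub_apply,
      sub_eq_zero] at hQ
    exact hQ.symm
  · have hnorm : ‖K.starProjection (v i)‖ = ‖v i‖ := by
      rw [v.orthonormal.1 i, ← pow_eq_one_iff_of_nonneg (norm_nonneg _) two_ne_zero]
      exact hcsc i hi
    exact (K.mem_iff_norm_starProjection _).2 hnorm

end SVD

/-- Uniqueness of the best rank-`k` approximation of a
quasimatrix-matrix `T : ℂ^m → H` (given in SVD form) under the strict gap
`σ_{k-1} > σ_k`: any rank-`≤ k` map `S` attaining the optimal Frobenius error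
`Σ_{i≥k} σ_i²` equals the truncation `T_k`. -/
theorem stmt2 (m d k : ℕ) (hk1 : 1 ≤ k) (hk2 : k ≤ m - 1)
    (T Tk : EuclideanSpace ℂ (Fin m) →L[ℂ] Hsp d)
    (v : Fin m → EuclideanSpace ℂ (Fin m)) (hv : Orthonormal ℂ v)
    (u : Fin m → Hsp d) (hu : Orthonormal ℂ u)
    (σ : Fin m → ℝ) (hσmono : Antitone σ) (hσ0 : ∀ i, 0 ≤ σ i)
    (hT : ∀ x, T x = ∑ i, ((σ i : ℂ) * inner ℂ (v i) x) • u i)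
    (hTk : ∀ x, Tk x = ∑ i ∈ Finset.univ.filter (fun i : Fin m => (i : ℕ) < k),
      ((σ i : ℂ) * inner ℂ (v i) x) • u i)
    (hgap : σ ⟨k, by omega⟩ < σ ⟨k - 1, by omega⟩)
    (S : EuclideanSpace ℂ (Fin m) →L[ℂ] Hsp d)
    (hS : Module.finrank ℂ (LinearMap.range (S : EuclideanSpace ℂ (Fin m) →ₗ[ℂ] Hsp d)) ≤ k)
    (hopt : ∑ i, ‖(T - S) (EuclideanSpace.single i 1)‖ ^ 2
        = ∑ i ∈ Finset.univ.filter (fun i : Fin m => k ≤ (i : ℕ)), σ i ^ 2) :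
    S = Tk := by
  let vB := OrthonormalBasis.mk hv
    (hv.linearIndependent.span_eq_top_of_card_eq_finrank' (by simp)).ge
  have hvB : ⇑vB = v := OrthonormalBasis.coe_mk _ _
  have hcompl : Finset.univ.filter (fun i : Fin m => k ≤ (i : ℕ)) =
      (Finset.univ.filter (fun i : Fin m => (i : ℕ) < k))ᶜ := by
    ext i; simp
  refine eq_truncation_of_sum_norm_sq_sub_le (v := vB) hu (t := σ ⟨k, by omega⟩ ^ 2)
    (fun x => by rw [hvB]; exact hT x) (fun x => by rw [hvB]; exact hTk x) (sq_nonneg _)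
    ?_ ?_ ?_ ?_
  · intro i hi
    have hik : (i : ℕ) < k := (Finset.mem_filter.1 hi).2
    exact pow_lt_pow_left₀ (hgap.trans_le (hσmono (by simp only [Fin.le_def]; omega)))
      (hσ0 _) two_ne_zero
  · intro i hi
    have hik : k ≤ (i : ℕ) := by simpa using hi
    exact pow_le_pow_left₀ (hσ0 i) (hσmono (by simp only [Fin.le_def]; omega)) 2
  · rwa [Fin.card_filter_val_lt, min_eq_right (by omega)]
  · rw [← hcompl, ← hopt, vB.sum_norm_sq_apply_eq (EuclideanSpace.basisFun (Fin m) ℂ)]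
    simp
end

section
/- Let H := (L²([−1,1];ℂ)) × ℂ^d, let A, B : ℂ^n → H be continuous linear maps, and let M : ℂ^{2n} → H be the concatenation [B A], M(x,y) := B x + A y. Suppose M has the SVD M = U ∘ Σ ∘ V*, meaning: U : ℂ^{2n} → H is continuous linear with U* ∘ U = id, V ∈ ℂ^{2n×2n} is unitary, Σ = diag(σ_0, …, σ_{2n−1}) with σ_0 ≥ σ_1 ≥ … ≥ σ_{2n−1} ≥ 0, and M w = U(Σ (V* w)) for all w. Partition V into n×n blocks V = [[V₁₁, V₁₂],[V₂₁, V₂₂]] (V₁₁ the top-left block). If σ_min(B) > σ_n (where σ_min(B) := inf_{‖x‖=1} ‖Bx‖ and indices start at 0, so σ_n is the (n+1)-st singular value of M), then V₁₁ and V₂₂ are invertible matrices and σ_{n−1} > σ_n. -/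
open MeasureTheory Matrix

/-- The smallest singular value `σ_min(B) := inf { ‖B x‖ : ‖x‖ = 1 }`. -/
noncomputable def sigMin {n d : ℕ} (B : EuclideanSpace ℂ (Fin n) →L[ℂ] Hsp d) : ℝ :=
  sInf ((fun x : EuclideanSpace ℂ (Fin n) => ‖B x‖) '' {x | ‖x‖ = 1})

/-! For `x ∈ ℂⁿ` we have `‖B x‖ = ‖M (x, 0)‖ = ‖Σ V* (x, 0)‖` because `U` is an isometry, while
`‖B x‖ > σₙ ‖x‖ = σₙ ‖V* (x, 0)‖`. Hence for `x ≠ 0` the vector `V* (x, 0)` has a nonzero coordinate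
`i` with `σᵢ > σₙ`, so `i < n` (and even `i < n - 1` if `σₙ₋₁ = σₙ`, by monotonicity). So
`x ↦ (V* (x, 0))_{<n} = V₁₁* x` is injective, and if `σₙ₋₁ = σₙ` then already
`x ↦ (V* (x, 0))_{<n-1}` would be an injective linear map `ℂⁿ → ℂⁿ⁻¹`. Finally, for unitary `V`,
`V₂₂ c = 0` gives `V (0, c) = (x, 0)` with `V₁₁* x = 0`, so invertibility of `V₁₁` passes to `V₂₂`. -/

namespace Matrix

section Blocks

variable {R : Type*} [NonUnitalNonAssocSemiring R] {ι : Type*} {m k : ℕ}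

theorem mulVec_append_zero (A : Matrix ι (Fin (m + k)) R) (x : Fin m → R) :
    A *ᵥ Fin.append x 0 = A.submatrix id (Fin.castAdd k) *ᵥ x := by
  ext i
  simp [mulVec, dotProduct, Fin.sum_univ_add]

theorem mulVec_zero_append (A : Matrix ι (Fin (m + k)) R) (y : Fin k → R) :
    A *ᵥ Fin.append 0 y = A.submatrix id (Fin.natAdd m) *ᵥ y := by
  ext i
  simp [mulVec, dotProduct, Fin.sum_univ_add]

end Blocks

variable {K : Type*} [Field K]

theorem exists_ne_zero_mulVec_eq_zero_of_card_lt {ι κ : Type*} [Fintype ι] [Fintype κ]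
    (A : Matrix ι κ K) (h : Fintype.card ι < Fintype.card κ) : ∃ x ≠ 0, A *ᵥ x = 0 := by
  obtain ⟨x, hx, hx0⟩ := Submodule.exists_mem_ne_zero_of_ne_bot
    (LinearMap.ker_ne_bot_of_finrank_lt (f := A.mulVecLin) (by simpa))
  exact ⟨x, hx0, hx⟩

theorem isUnit_submatrix_natAdd_of_isUnit_submatrix_castAdd [StarRing K] {m k : ℕ}
    {V : Matrix (Fin (m + k)) (Fin (m + k)) K} (hV : Vᴴ * V = 1)
    (h : IsUnit (V.submatrix (Fin.castAdd k) (Fin.castAdd k))) :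
    IsUnit (V.submatrix (Fin.natAdd m) (Fin.natAdd m)) := by
  rw [← mulVec_injective_iff_isUnit]
  refine (injective_iff_map_eq_zero (mulVecLin _)).2 fun c hc => ?_
  set w := V *ᵥ Fin.append 0 c
  have hw : w = Fin.append (w ∘ Fin.castAdd k) 0 := by
    conv_lhs => rw [← Fin.append_castAdd_natAdd (f := w)]
    congr 1
    funext i
    exact (congrFun (mulVec_zero_append V c) (Fin.natAdd m i)).trans (congrFun hc i)
  have hVw : Vᴴ *ᵥ w = Fin.append 0 c := by simp [w, mulVec_mulVec, hV]
  have hx : w ∘ Fin.castAdd k = 0 := by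
    refine (injective_iff_map_eq_zero (mulVecLin _)).1
      (mulVec_injective_iff_isUnit.2 ((isUnit_conjTranspose _).2 h)) _ ?_
    funext i
    have := congrFun hVw (Fin.castAdd k i)
    rw [hw, mulVec_append_zero, Fin.append_left] at this
    exact this
  have hw0 : Fin.append (0 : Fin m → K) c = 0 := by
    rw [← hVw, hw, hx, mulVec_append_zero, mulVec_zero]
  funext i
  simpa using congrFun hw0 (Fin.natAdd m i)

section EuclideanSpace

variable {𝕜 : Type*} [RCLike 𝕜] {ι : Type*} [Fintype ι] [DecidableEq ι]

theorem norm_toEuclideanLin_of_conjTranspose_mul_self {κ : Type*} [Fintype κ] [DecidableEq κ]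
    {A : Matrix κ ι 𝕜} (hA : Aᴴ * A = 1) (x : EuclideanSpace 𝕜 ι) :
    ‖toEuclideanLin A x‖ = ‖x‖ := by
  refine (LinearMap.norm_map_iff_inner_map_map (toEuclideanLin A)).2 (fun x y => ?_) x
  rw [← LinearMap.adjoint_inner_right, ← toEuclideanLin_conjTranspose_eq_adjoint]
  simp [toLpLin_apply, mulVec_mulVec, hA]

theorem norm_toEuclideanLin_diagonal_le (s : ι → 𝕜) {c : ℝ} (hc : 0 ≤ c)
    {z : EuclideanSpace 𝕜 ι} (h : ∀ i, z i ≠ 0 → ‖s i‖ ≤ c) :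
    ‖toEuclideanLin (diagonal s) z‖ ≤ c * ‖z‖ := by
  refine (sq_le_sq₀ (norm_nonneg _) (by positivity)).1 ?_
  rw [mul_pow, EuclideanSpace.norm_sq_eq, EuclideanSpace.norm_sq_eq, Finset.mul_sum]
  refine Finset.sum_le_sum fun i _ => ?_
  rw [toLpLin_apply, WithLp.ofLp_toLp, mulVec_diagonal, norm_mul, mul_pow]
  by_cases hz : z i = 0
  · simp [hz]
  · gcongr
    exact h i hz

end EuclideanSpace

end Matrix


theorem EuclideanSpace.norm_toLp_append_zero {𝕜 : Type*} [RCLike 𝕜] {m k : ℕ} (x : Fin m → 𝕜) :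
    ‖WithLp.toLp 2 (Fin.append x (0 : Fin k → 𝕜))‖ = ‖WithLp.toLp 2 x‖ := by
  simp [EuclideanSpace.norm_eq, Fin.sum_univ_add]

section SigMin

variable {n d : ℕ}

theorem sigMin_mul_norm_le (B : EuclideanSpace ℂ (Fin n) →L[ℂ] Hsp d)
    (x : EuclideanSpace ℂ (Fin n)) : sigMin B * ‖x‖ ≤ ‖B x‖ := by
  rcases eq_or_ne x 0 with rfl | hx
  · simp
  have hx' : 0 < ‖x‖ := norm_pos_iff.2 hx
  have h : sigMin B ≤ ‖B ((‖x‖⁻¹ : ℂ) • x)‖ :=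
    csInf_le ⟨0, by rintro _ ⟨y, -, rfl⟩; exact norm_nonneg _⟩
      ⟨_, by simp [norm_smul, hx'.ne'], rfl⟩
  rw [map_smul, norm_smul, norm_inv, Complex.norm_real, norm_norm] at h
  rwa [le_inv_mul_iff₀ hx', mul_comm] at h

theorem eq_zero_of_lt_sigMin {ι : Type*} [Fintype ι] [DecidableEq ι]
    {B : EuclideanSpace ℂ (Fin n) →L[ℂ] Hsp d}
    {W : EuclideanSpace ℂ (Fin n) → EuclideanSpace ℂ ι} {s : ι → ℂ}
    (hW : ∀ x, ‖W x‖ = ‖x‖) (hB : ∀ x, ‖B x‖ = ‖toEuclideanLin (diagonal s) (W x)‖)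
    {c : ℝ} (hc0 : 0 ≤ c) (hc : c < sigMin B) {x : EuclideanSpace ℂ (Fin n)}
    (hx : ∀ i, c < ‖s i‖ → W x i = 0) : x = 0 := by
  by_contra hx0
  have hle : ‖B x‖ ≤ c * ‖x‖ := by
    rw [hB, ← hW]
    exact norm_toEuclideanLin_diagonal_le s hc0 fun i hi => not_lt.1 fun h => hi (hx i h)
  exact (mul_lt_mul_of_pos_right hc (norm_pos_iff.2 hx0)).not_ge
    ((sigMin_mul_norm_le B x).trans hle)

end SigMin

/-- Let `M = [B A] : ℂ^{2n} → H` have the SVD `M = U ∘ Σ ∘ V*`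
(`U* ∘ U = id`, `V` unitary, `Σ = diag(σ_0 ≥ … ≥ σ_{2n-1} ≥ 0)`).  If
`σ_min(B) > σ_n`, then the diagonal blocks `V₁₁` and `V₂₂` of `V` are invertible
and `σ_{n-1} > σ_n`. -/
theorem stmt4 (n d : ℕ) (hn : 0 < n)
    (A B : EuclideanSpace ℂ (Fin n) →L[ℂ] Hsp d)
    (M : EuclideanSpace ℂ (Fin (n + n)) →L[ℂ] Hsp d)
    (hMdef : ∀ x y : EuclideanSpace ℂ (Fin n),
      M (WithLp.toLp 2 (fun i => Fin.addCases (fun i => x i) (fun j => y j) i)) = B x + A y)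
    (U : EuclideanSpace ℂ (Fin (n + n)) →L[ℂ] Hsp d)
    (hU : (ContinuousLinearMap.adjoint U).comp U
      = ContinuousLinearMap.id ℂ (EuclideanSpace ℂ (Fin (n + n))))
    (V : Matrix (Fin (n + n)) (Fin (n + n)) ℂ) (hV : Vᴴ * V = 1)
    (σ : Fin (n + n) → ℝ) (hσmono : Antitone σ) (hσ0 : ∀ i, 0 ≤ σ i)
    (hSVD : ∀ w, M w = U (Matrix.toEuclideanLin (Matrix.diagonal fun i => (σ i : ℂ))
        (Matrix.toEuclideanLin Vᴴ w)))
    (hgap : σ ⟨n, by omega⟩ < sigMin B) :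
    IsUnit (Matrix.of fun i j : Fin n => V (Fin.castAdd n i) (Fin.castAdd n j)) ∧
    IsUnit (Matrix.of fun i j : Fin n => V (Fin.natAdd n i) (Fin.natAdd n j)) ∧
    σ ⟨n, by omega⟩ < σ ⟨n - 1, by omega⟩ := by
  have hW : ∀ y : EuclideanSpace ℂ (Fin n),
      ‖toEuclideanLin Vᴴ (WithLp.toLp 2 (Fin.append y.ofLp 0))‖ = ‖y‖ := fun y => by
    rw [norm_toEuclideanLin_of_conjTranspose_mul_self (by simpa using mul_eq_one_comm.1 hV),
      EuclideanSpace.norm_toLp_append_zero, WithLp.toLp_ofLp]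
  have hB : ∀ y, ‖B y‖ = ‖toEuclideanLin (diagonal fun i => (σ i : ℂ))
      (toEuclideanLin Vᴴ (WithLp.toLp 2 (Fin.append y.ofLp 0)))‖ := fun y => by
    rw [← add_zero (B y), ← map_zero A, ← hMdef, hSVD, U.norm_map_iff_adjoint_comp_self.2 hU]
    rfl -- `Fin.append` is `Fin.addCases`
  have hlow : ∀ (m : ℕ) (hm : m < n + n), σ ⟨m, hm⟩ ≤ σ ⟨n, by omega⟩ → ∀ x : Fin n → ℂ,
      Vᴴ.submatrix (Fin.castLE hm.le) (Fin.castAdd n) *ᵥ x = 0 → x = 0 := by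
    intro m hm hσm x hx
    simpa using eq_zero_of_lt_sigMin hW hB (hσ0 _) hgap (x := WithLp.toLp 2 x) fun i hi => by
      rw [Complex.norm_real, Real.norm_of_nonneg (hσ0 i)] at hi
      obtain ⟨j, rfl⟩ : ∃ j : Fin m, Fin.castLE hm.le j = i :=
        ⟨⟨i, hσmono.reflect_lt (hσm.trans_lt hi)⟩, rfl⟩
      simp only [toLpLin_toLp, toLin'_apply, mulVec_append_zero]
      exact congrFun hx j
  have h11 : IsUnit (V.submatrix (Fin.castAdd n) (Fin.castAdd n)) := by
    rw [← isUnit_conjTranspose, ← mulVec_injective_iff_isUnit]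
    exact (injective_iff_map_eq_zero (mulVecLin _)).2 (hlow n (by omega) le_rfl)
  refine ⟨h11, isUnit_submatrix_natAdd_of_isUnit_submatrix_castAdd hV h11, ?_⟩
  by_contra! hle
  obtain ⟨x, hx0, hx⟩ := exists_ne_zero_mulVec_eq_zero_of_card_lt
    (Vᴴ.submatrix (Fin.castLE (by omega : n - 1 ≤ n + n)) (Fin.castAdd n)) (by simp; omega)
  exact hx0 (hlow (n - 1) (by omega) hle x hx)
end

section
/- Let A, B ∈ ℂ^{m×n} and suppose the concatenated matrix [A B] ∈ ℂ^{m×2n} has the (thin) SVD [A B] = U Σ V*, where U ∈ ℂ^{m×2n} satisfies U* U = I_{2n}, V ∈ ℂ^{2n×2n} is unitary, and Σ = diag(σ_1, …, σ_{2n}) with σ_1 ≥ … ≥ σ_{2n} ≥ 0. Write U = [U₁ U₂] with U₁ ∈ ℂ^{m×n} the first n columns, Σ₁ := diag(σ_1,…,σ_n), and partition V into n×n blocks [[V₁₁,V₁₂],[V₂₁,V₂₂]]. Then U₁* A = Σ₁ V₁₁* and U₁* B = Σ₁ V₂₁*. Consequently, if Σ₁ is invertible, then for any X ∈ ℂ^{n×n}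 and diagonal Λ ∈ ℂ^{n×n}, the equation V₁₁* X = V₂₁* X Λ holds if and only if (U₁* A) X = (U₁* B) X Λ; that is, the Ito–Murota generalized eigenvalue problem is equivalent to the problem projected onto the leading n left singular vectors of [A B]. -/
open Matrix

/-! Multiplying the thin SVD `[A B] = U Σ V*` on the left by `U*` gives `U* [A B] = Σ V*`;
the first block row of this identity reads `U₁* A = Σ₁ V₁₁*` and `U₁* B = Σ₁ V₂₁*`.
When `Σ₁` is invertible it can be cancelled on the left of the projected pencil equation,
which turns it into `V₁₁* X = V₂₁* X Λ`. -/

namespace Matrix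

variable {R m n₁ n₂ k₁ k₂ : Type*} [Semiring R] [StarRing R] [Fintype m]

lemma toBlocks₁₁_conjTranspose_mul_fromCols (U : Matrix m (k₁ ⊕ k₂) R) (A : Matrix m n₁ R)
    (B : Matrix m n₂ R) : (Uᴴ * fromCols A B).toBlocks₁₁ = U.toCols₁ᴴ * A :=
  rfl

lemma toBlocks₁₂_conjTranspose_mul_fromCols (U : Matrix m (k₁ ⊕ k₂) R) (A : Matrix m n₁ R)
    (B : Matrix m n₂ R) : (Uᴴ * fromCols A B).toBlocks₁₂ = U.toCols₁ᴴ * B :=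
  rfl

variable [Fintype k₁] [Fintype k₂] [DecidableEq k₁] [DecidableEq k₂]

lemma toBlocks₁₁_diagonal_mul_conjTranspose (d : k₁ ⊕ k₂ → R)
    (V : Matrix (n₁ ⊕ n₂) (k₁ ⊕ k₂) R) :
    (diagonal d * Vᴴ).toBlocks₁₁ = diagonal (fun i => d (Sum.inl i)) * V.toBlocks₁₁ᴴ := by
  ext i j
  simp [toBlocks₁₁, diagonal_mul]

lemma toBlocks₁₂_diagonal_mul_conjTranspose (d : k₁ ⊕ k₂ → R)
    (V : Matrix (n₁ ⊕ n₂) (k₁ ⊕ k₂) R) :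
    (diagonal d * Vᴴ).toBlocks₁₂ = diagonal (fun i => d (Sum.inl i)) * V.toBlocks₂₁ᴴ := by
  ext i j
  simp [toBlocks₁₂, toBlocks₂₁, diagonal_mul]

theorem toCols₁_conjTranspose_mul_of_eq_svd {U : Matrix m (k₁ ⊕ k₂) R} (hU : Uᴴ * U = 1)
    {A : Matrix m n₁ R} {B : Matrix m n₂ R} {d : k₁ ⊕ k₂ → R}
    {V : Matrix (n₁ ⊕ n₂) (k₁ ⊕ k₂) R} (hSVD : fromCols A B = U * diagonal d * Vᴴ) :
    U.toCols₁ᴴ * A = diagonal (fun i => d (Sum.inl i)) * V.toBlocks₁₁ᴴ ∧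
      U.toCols₁ᴴ * B = diagonal (fun i => d (Sum.inl i)) * V.toBlocks₂₁ᴴ := by
  have hproj : Uᴴ * fromCols A B = diagonal d * Vᴴ := by
    rw [hSVD, Matrix.mul_assoc, ← Matrix.mul_assoc Uᴴ, hU, Matrix.one_mul]
  rw [← toBlocks₁₁_conjTranspose_mul_fromCols U A B, ← toBlocks₁₂_conjTranspose_mul_fromCols U A B,
    hproj, toBlocks₁₁_diagonal_mul_conjTranspose, toBlocks₁₂_diagonal_mul_conjTranspose]
  exact ⟨rfl, rfl⟩

end Matrix

theorem stmt17_general (m n : ℕ) (A B : Matrix (Fin m) (Fin n) ℂ)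
    (U : Matrix (Fin m) (Fin n ⊕ Fin n) ℂ) (hU : Uᴴ * U = 1)
    (V : Matrix (Fin n ⊕ Fin n) (Fin n ⊕ Fin n) ℂ)
    (σ : Fin n ⊕ Fin n → ℝ)
    (hSVD : Matrix.fromCols A B = U * Matrix.diagonal (fun i => (σ i : ℂ)) * Vᴴ) :
    (U.toCols₁ᴴ * A
        = Matrix.diagonal (fun i : Fin n => (σ (Sum.inl i) : ℂ)) * V.toBlocks₁₁ᴴ) ∧
    (U.toCols₁ᴴ * B
        = Matrix.diagonal (fun i : Fin n => (σ (Sum.inl i) : ℂ)) * V.toBlocks₂₁ᴴ) ∧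
    (IsUnit (Matrix.diagonal (fun i : Fin n => (σ (Sum.inl i) : ℂ))) →
      ∀ (X Λ : Matrix (Fin n) (Fin n) ℂ), Λ.IsDiag →
        (V.toBlocks₁₁ᴴ * X = V.toBlocks₂₁ᴴ * X * Λ ↔
          U.toCols₁ᴴ * A * X = U.toCols₁ᴴ * B * X * Λ)) := by
  obtain ⟨hA, hB⟩ := toCols₁_conjTranspose_mul_of_eq_svd hU hSVD
  refine ⟨hA, hB, fun hdiag X Λ _ => ?_⟩
  rw [hA, hB]
  simp only [Matrix.mul_assoc]
  exact hdiag.mul_right_inj.symm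

/-- Let `[A B] = U Σ V*` be a thin SVD of the concatenation of
`A, B ∈ ℂ^{m×n}` (`U* U = I`, `V` unitary, `Σ = diag(σ₁ ≥ … ≥ σ_{2n} ≥ 0)`), with
`U₁` the first `n` columns of `U`, `Σ₁ = diag(σ₁,…,σ_n)`, and `V₁₁`, `V₂₁` the
left blocks of `V`.  Then `U₁* A = Σ₁ V₁₁*` and `U₁* B = Σ₁ V₂₁*`; consequently,
if `Σ₁` is invertible, the Ito-Murota pencil equation `V₁₁* X = V₂₁* X Λ` (for any
`X` and diagonal `Λ`) is equivalent to the projected equation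
`(U₁* A) X = (U₁* B) X Λ`. -/
theorem stmt17 (m n : ℕ) (A B : Matrix (Fin m) (Fin n) ℂ)
    (U : Matrix (Fin m) (Fin n ⊕ Fin n) ℂ) (hU : Uᴴ * U = 1)
    (V : Matrix (Fin n ⊕ Fin n) (Fin n ⊕ Fin n) ℂ) (hV : Vᴴ * V = 1)
    (σ : Fin n ⊕ Fin n → ℝ) (hσ0 : ∀ i, 0 ≤ σ i)
    (hσmono : Antitone fun i : Fin (n + n) => σ (finSumFinEquiv.symm i))
    (hSVD : Matrix.fromCols A B = U * Matrix.diagonal (fun i => (σ i : ℂ)) * Vᴴ) :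
    (U.toCols₁ᴴ * A
        = Matrix.diagonal (fun i : Fin n => (σ (Sum.inl i) : ℂ)) * V.toBlocks₁₁ᴴ) ∧
    (U.toCols₁ᴴ * B
        = Matrix.diagonal (fun i : Fin n => (σ (Sum.inl i) : ℂ)) * V.toBlocks₂₁ᴴ) ∧
    (IsUnit (Matrix.diagonal (fun i : Fin n => (σ (Sum.inl i) : ℂ))) →
      ∀ (X Λ : Matrix (Fin n) (Fin n) ℂ), Λ.IsDiag →
        (V.toBlocks₁₁ᴴ * X = V.toBlocks₂₁ᴴ * X * Λ ↔
          U.toCols₁ᴴ * A * X = U.toCols₁ᴴ * B * X * Λ)) :=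
  stmt17_general m n A B U hU V σ hSVD
end
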